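/- arXiv:2002.01893 — 2 statements merged into one kernel-verified Lean document; each statement's English description precedes it below -/
import Mathlib

section
/- For a homogeneous material on a uniform grid, the linear map from the response image U to the loading image V defined nodewise by the FEA assembly with identical 4×4 element stiffness matrices K^e (Eq. 7) equals the 2D discrete convolution of U with the 3×3 kernel W whose entries are W₁₁=K^e₄₂, W₁₂=K^e₃₂+K^e₄₁, W₁₃=K^e₃₁, W₂₁=K^e₄₃+K^e₁₂, W₂₂=K^e₁₁+K^e₂₂+K^e₃₃+K^e₄₄, W₂₃=K^e₃₄+K^e₂₁, W₃₁=K^e₁₃, W₃₂=K^e₂₃+K^e₁₄, W₃₃=K^e₂₄. -/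
open Matrix

/-- For a homogeneous material on a uniform grid, the FEA assembly with
identical element stiffness matrices `K^e` (Eq. 7) equals the 2D discrete
convolution of the response image `U` with the 3×3 kernel `W` of Eq. 8. -/
theorem fea_assembly_is_convolution
    (Ke : Matrix (Fin 4) (Fin 4) ℝ)
    (U V : ℤ → ℤ → ℝ)
    (hV : ∀ i j : ℤ,
      V i j =
        Ke 0 2 * U (i + 1) (j - 1) + Ke 1 2 * U (i + 1) j +
          Ke 2 2 * U i j + Ke 3 2 * U i (j - 1) +
        (Ke 0 3 * U (i + 1) j + Ke 1 3 * U (i + 1) (j + 1) +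
          Ke 2 3 * U i (j + 1) + Ke 3 3 * U i j) +
        (Ke 0 0 * U i j + Ke 1 0 * U i (j + 1) +
          Ke 2 0 * U (i - 1) (j + 1) + Ke 3 0 * U (i - 1) j) +
        (Ke 0 1 * U i (j - 1) + Ke 1 1 * U i j +
          Ke 2 1 * U (i - 1) j + Ke 3 1 * U (i - 1) (j - 1))) :
    ∀ i j : ℤ,
      V i j =
        ∑ a : Fin 3, ∑ b : Fin 3,
          (!![Ke 3 1, Ke 2 1 + Ke 3 0, Ke 2 0;
              Ke 3 2 + Ke 0 1, Ke 0 0 + Ke 1 1 + Ke 2 2 + Ke 3 3, Ke 2 3 + Ke 1 0;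
              Ke 0 2, Ke 1 2 + Ke 0 3, Ke 1 3] : Matrix (Fin 3) (Fin 3) ℝ) a b *
            U (i + (a : ℤ) - 1) (j + (b : ℤ) - 1) := by
  intro i j
  rw [hV i j]
  simp [Fin.sum_univ_succ, Matrix.of_apply]
  ring_nf
end

section
/- For homogeneous material (H ≡ 1), the bi-phase FEA convolution V = Θ ⊗ (U, H) reduces to the single-phase FEA convolution V = W ⊛ U, where the 3×3 kernel W is assembled from the phase-1 element matrices Θ¹ via the kernel assembly formula of Eq. 8. -/
open Matrix

/-! With `H ≡ 1` the phase weights `h + (-1)^h H` are `1` for phase `0` and `0` for phase `1`,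
so only `Θ 0` survives; expanding the `3 × 3` stencil sum and collecting the coefficient of each
of the nine neighbours of `(i, j)` gives the assembled kernel. -/

section PhaseWeight

variable {R : Type*} [Ring R]

@[simp]
lemma phase_weight_zero (x : R) :
    (((0 : Fin 2) : ℕ) : R) + (-1 : R) ^ ((0 : Fin 2) : ℕ) * x = x := by
  simp

@[simp]
lemma phase_weight_one (x : R) :
    (((1 : Fin 2) : ℕ) : R) + (-1 : R) ^ ((1 : Fin 2) : ℕ) * x = 1 - x := by
  simp [sub_eq_add_neg]

end PhaseWeight

lemma sum_fin_three_stencil {R : Type*} [AddCommMonoid R] [Mul R]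
    (W : Matrix (Fin 3) (Fin 3) R) (U : ℤ → ℤ → R) (i j : ℤ) :
    ∑ a : Fin 3, ∑ b : Fin 3, W a b * U (i + (a : ℤ) - 1) (j + (b : ℤ) - 1) =
      W 0 0 * U (i - 1) (j - 1) + W 0 1 * U (i - 1) j + W 0 2 * U (i - 1) (j + 1) +
      (W 1 0 * U i (j - 1) + W 1 1 * U i j + W 1 2 * U i (j + 1)) +
      (W 2 0 * U (i + 1) (j - 1) + W 2 1 * U (i + 1) j + W 2 2 * U (i + 1) (j + 1)) := by
  simp only [Fin.sum_univ_three, Fin.val_zero, Fin.val_one, Fin.val_two]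
  ring_nf

/-- For homogeneous material (`H ≡ 1`), the bi-phase FEA convolution
(Eq. 13) reduces to the single-phase FEA convolution `V = W ⊛ U`, where the
3×3 kernel `W` is assembled from the surviving phase's element matrix `Θ⁰`
via the kernel assembly formula of Eq. 8. -/
theorem biphase_reduces_to_singlephase
    (Θ : Fin 2 → Matrix (Fin 4) (Fin 4) ℝ)
    (U V H : ℤ → ℤ → ℝ)
    (hH : ∀ i j : ℤ, H i j = 1)
    (hV : ∀ i j : ℤ,
      V i j =
        ∑ h : Fin 2,
          ((Θ h 0 2 * U (i + 1) (j - 1) + Θ h 1 2 * U (i + 1) j +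
              Θ h 2 2 * U i j + Θ h 3 2 * U i (j - 1)) *
            ((h : ℝ) + (-1 : ℝ) ^ (h : ℕ) * H i (j - 1)) +
          (Θ h 0 3 * U (i + 1) j + Θ h 1 3 * U (i + 1) (j + 1) +
              Θ h 2 3 * U i (j + 1) + Θ h 3 3 * U i j) *
            ((h : ℝ) + (-1 : ℝ) ^ (h : ℕ) * H i j) +
          (Θ h 0 0 * U i j + Θ h 1 0 * U i (j + 1) +
              Θ h 2 0 * U (i - 1) (j + 1) + Θ h 3 0 * U (i - 1) j) *
            ((h : ℝ) + (-1 : ℝ) ^ (h : ℕ) * H (i - 1) j) +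
          (Θ h 0 1 * U i (j - 1) + Θ h 1 1 * U i j +
              Θ h 2 1 * U (i - 1) j + Θ h 3 1 * U (i - 1) (j - 1)) *
            ((h : ℝ) + (-1 : ℝ) ^ (h : ℕ) * H (i - 1) (j - 1)))) :
    ∀ i j : ℤ,
      V i j =
        ∑ a : Fin 3, ∑ b : Fin 3,
          (!![Θ 0 3 1, Θ 0 2 1 + Θ 0 3 0, Θ 0 2 0;
              Θ 0 3 2 + Θ 0 0 1, Θ 0 0 0 + Θ 0 1 1 + Θ 0 2 2 + Θ 0 3 3,
                Θ 0 2 3 + Θ 0 1 0;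
              Θ 0 0 2, Θ 0 1 2 + Θ 0 0 3, Θ 0 1 3] : Matrix (Fin 3) (Fin 3) ℝ)
              a b *
            U (i + (a : ℤ) - 1) (j + (b : ℤ) - 1) := by
  intro i j
  rw [hV, sum_fin_three_stencil, Fin.sum_univ_two]
  simp only [hH, phase_weight_zero, phase_weight_one]
  simp only [of_apply, cons_val', cons_val_zero, cons_val_one, cons_val_two, head_cons,
    tail_cons, head_fin_const, empty_val', cons_val_fin_one]
  ring
end
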